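/- arXiv:cond-mat/9705315 — 2 statements merged into one kernel-verified Lean document; each statement's English description precedes it below -/
import Mathlib

section
/- Let T be the adjacency matrix of a graph with maximum degree d and S diagonal with diagonal entries ±1. If U > d/2, then the number of negative eigenvalues of T - 2US (with multiplicity) equals the number of indices x with S_{xx} = 1. -/
/-!
On the span `P` of the coordinate vectors `e_x` with `S x x = 1`, the quadratic form of
`M = T - 2U·S` is at most `(d - 2U)‖v‖² < 0`, and on the complementary coordinate span it is at
least `(2U - d)‖v‖² ≥ 0`, because `|vᵀ T v| ≤ d ‖v‖²` for a graph of maximum degree `d`.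
A negative definite subspace and a complementary positive semidefinite one pin the negative
index of inertia of `M` to `dim P`, and by diagonalising `M` in an orthonormal eigenbasis that
index is the number of negative eigenvalues.
-/

open Finset Matrix QuadraticMap QuadraticForm

lemma QuadraticForm.sigNeg_eq_finrank_of_negDef {𝕜 M : Type*} [Field 𝕜] [LinearOrder 𝕜]
    [IsStrictOrderedRing 𝕜] [AddCommGroup M] [Module 𝕜 M] [FiniteDimensional 𝕜 M]
    {Q : QuadraticForm 𝕜 M} {V W : Submodule 𝕜 M} (hV : ((-Q).restrict V).PosDef)
    (hW : ∀ x ∈ W, 0 ≤ Q x)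
    (hVW : Module.finrank 𝕜 V + Module.finrank 𝕜 W = Module.finrank 𝕜 M) :
    sigNeg Q = Module.finrank 𝕜 V := by
  have hle := le_sigNeg_of_negDef Q hV
  have hge := sigPos_add_finrank_le_of_nonpos (Q := -Q) (V := W) (by simpa using hW)
  rw [sigPos_neg] at hge
  omega

lemma SimpleGraph.abs_dotProduct_adjMatrix_mulVec_le {V R : Type*} [Fintype V] [Field R]
    [LinearOrder R] [IsStrictOrderedRing R] (G : SimpleGraph V) [DecidableRel G.Adj] {d : ℕ}
    (hdeg : ∀ v, G.degree v ≤ d) (x : V → R) :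
    |x ⬝ᵥ G.adjMatrix R *ᵥ x| ≤ d * (x ⬝ᵥ x) := by
  have hsymm : ∑ i, ∑ j, (if G.Adj i j then x j ^ 2 else 0) =
      ∑ i, ∑ j, (if G.Adj i j then x i ^ 2 else 0) := by
    rw [Finset.sum_comm]
    simp_rw [G.adj_comm]
  have hrow (i : V) : ∑ j, (if G.Adj i j then x i ^ 2 else 0) = G.degree i * x i ^ 2 := by
    rw [sum_ite, sum_const_zero, add_zero, sum_const, nsmul_eq_mul,
      ← G.card_neighborFinset_eq_degree, G.neighborFinset_eq_filter]
  calc |x ⬝ᵥ G.adjMatrix R *ᵥ x|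
      ≤ ∑ i, ∑ j, |if G.Adj i j then x i * x j else 0| := by
        rw [dotProduct_mulVec_adjMatrix]
        exact (abs_sum_le_sum_abs _ _).trans (sum_le_sum fun i _ => abs_sum_le_sum_abs _ _)
    _ ≤ ∑ i, ∑ j,
          ((if G.Adj i j then x i ^ 2 else 0) + (if G.Adj i j then x j ^ 2 else 0)) / 2 := by
        gcongr with i _ j _
        split_ifs
        · rw [abs_mul, le_div_iff₀ two_pos, ← sq_abs (x i), ← sq_abs (x j)]
          linarith [two_mul_le_add_sq |x i| |x j|]
        · simp
    _ = ∑ i, G.degree i * x i ^ 2 := by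
        simp_rw [← sum_div, sum_add_distrib, hsymm, hrow]
        ring
    _ ≤ ∑ i, d * x i ^ 2 := by
        gcongr with i
        exact_mod_cast hdeg i
    _ = d * (x ⬝ᵥ x) := by
        simp [dotProduct, mul_sum, pow_two]

lemma EuclideanSpace.ofLp_dotProduct_ofLp {ι : Type*} [Fintype ι] (x y : EuclideanSpace ℝ ι) :
    x.ofLp ⬝ᵥ y.ofLp = inner ℝ x y := by
  rw [EuclideanSpace.inner_eq_star_dotProduct, star_trivial, dotProduct_comm]

section

variable {ι : Type*} [Fintype ι] [DecidableEq ι]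

lemma Matrix.toQuadraticForm'_apply {R : Type*} [CommRing R] (M : Matrix ι ι R) (v : ι → R) :
    M.toQuadraticForm' v = v ⬝ᵥ M *ᵥ v :=
  toLinearMap₂'_apply' M v v

lemma Matrix.dotProduct_diagonal_mulVec_of_mem_spanSubset {R : Type*} [CommRing R]
    {w : ι → R} {c : R} {v : ι → R} (hv : v ∈ Pi.spanSubset R {i | w i = c}) :
    v ⬝ᵥ diagonal w *ᵥ v = c * (v ⬝ᵥ v) := by
  simp only [dotProduct, mulVec_diagonal, mul_sum]
  refine sum_congr rfl fun i _ => ?_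
  by_cases hi : w i = c
  · rw [hi]
    ring
  · simp [Pi.mem_spanSubset_iff.mp hv i hi]

lemma Matrix.toQuadraticForm'_sub_smul_diagonal_of_mem_spanSubset {R : Type*} [CommRing R]
    (A : Matrix ι ι R) (a : R) {w : ι → R} {c : R} {v : ι → R}
    (hv : v ∈ Pi.spanSubset R {i | w i = c}) :
    (A - a • diagonal w).toQuadraticForm' v = v ⬝ᵥ A *ᵥ v - a * c * (v ⬝ᵥ v) := by
  rw [toQuadraticForm'_apply, sub_mulVec, dotProduct_sub, smul_mulVec, dotProduct_smul,
    dotProduct_diagonal_mulVec_of_mem_spanSubset hv, smul_eq_mul, mul_assoc]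

lemma Matrix.IsHermitian.toQuadraticForm'_sum_smul_eigenvectorBasis {M : Matrix ι ι ℝ}
    (hM : M.IsHermitian) (c : ι → ℝ) :
    M.toQuadraticForm' (∑ i, c i • hM.eigenvectorBasis i).ofLp =
      ∑ i, hM.eigenvalues i * (c i * c i) := by
  have hMv : M *ᵥ (∑ i, c i • hM.eigenvectorBasis i).ofLp =
      (∑ i, (hM.eigenvalues i * c i) • hM.eigenvectorBasis i).ofLp := by
    simp only [WithLp.ofLp_sum, WithLp.ofLp_smul, mulVec_sum, mulVec_smul,
      hM.mulVec_eigenvectorBasis, smul_smul, mul_comm]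
  rw [toQuadraticForm'_apply, hMv, EuclideanSpace.ofLp_dotProduct_ofLp,
    hM.eigenvectorBasis.orthonormal.inner_sum]
  simp only [conj_trivial]
  exact sum_congr rfl fun i _ => by ring

noncomputable def Matrix.IsHermitian.isometryEquivWeightedSumSquares {M : Matrix ι ι ℝ}
    (hM : M.IsHermitian) :
    (weightedSumSquares ℝ hM.eigenvalues).IsometryEquiv M.toQuadraticForm' where
  toLinearEquiv := (WithLp.linearEquiv 2 ℝ (ι → ℝ)).symm ≪≫ₗ
    hM.eigenvectorBasis.repr.symm.toLinearEquiv ≪≫ₗ WithLp.linearEquiv 2 ℝ (ι → ℝ)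
  map_app' c := by
    simpa [← hM.eigenvectorBasis.sum_repr_symm] using
      hM.toQuadraticForm'_sum_smul_eigenvectorBasis c

lemma Matrix.IsHermitian.sigNeg_toQuadraticForm' {M : Matrix ι ι ℝ} (hM : M.IsHermitian) :
    sigNeg M.toQuadraticForm' = #{i | hM.eigenvalues i < 0} := by
  rw [sigNeg_of_equiv_weightedSumSquares ⟨hM.isometryEquivWeightedSumSquares.symm⟩,
    Set.ncard_eq_toFinset_card', Set.toFinset_ofPred]

end

/-- Let `T` be the adjacency matrix of a finite simple graph of maximum degree `d`,
and let `S` be a diagonal matrix with diagonal entries `±1`. If `2U > d`, then the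
number of negative eigenvalues of `T - 2U·S` (with multiplicity) equals the number
of indices `x` with `S x x = 1`. -/
theorem card_neg_eigenvalues_eq_card_plus_sites
    (n : ℕ) (G : SimpleGraph (Fin n)) [DecidableRel G.Adj]
    (d : ℕ) (hdeg : ∀ v : Fin n, G.degree v ≤ d)
    (S : Matrix (Fin n) (Fin n) ℝ)
    (hdiag : ∀ x y : Fin n, x ≠ y → S x y = 0)
    (hpm : ∀ x : Fin n, S x x = 1 ∨ S x x = -1)
    (U : ℝ) (hU : (d : ℝ) < 2 * U)
    (hM : ((G.adjMatrix ℝ) - (2 * U) • S).IsHermitian) :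
    (Finset.univ.filter (fun i : Fin n => hM.eigenvalues i < 0)).card
      = (Finset.univ.filter (fun x : Fin n => S x x = 1)).card := by
  obtain ⟨s, rfl⟩ : ∃ s, S = diagonal s := ⟨S.diag, (IsDiag.diagonal_diag hdiag).symm⟩
  simp only [diagonal_apply_eq] at hpm ⊢
  have hT := G.abs_dotProduct_adjMatrix_mulVec_le (R := ℝ) hdeg
  rw [← hM.sigNeg_toQuadraticForm', ← Set.toFinset_ofPred, ← Set.ncard_eq_toFinset_card',
    ← Pi.dim_spanSubset (R := ℝ)]
  refine sigNeg_eq_finrank_of_negDef (W := Pi.spanSubset ℝ {x | s x = -1}) ?_ ?_ ?_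
  · rintro ⟨v, hv⟩ hv0
    have hvv : 0 < star v ⬝ᵥ v := dotProduct_star_self_pos_iff.mpr (by simpa using hv0)
    rw [star_trivial] at hvv
    rw [restrict_apply, _root_.neg_apply,
      toQuadraticForm'_sub_smul_diagonal_of_mem_spanSubset _ _ hv]
    nlinarith [le_abs_self (v ⬝ᵥ G.adjMatrix ℝ *ᵥ v), hT v]
  · intro v hv
    have hvv := dotProduct_star_self_nonneg v
    rw [star_trivial] at hvv
    rw [toQuadraticForm'_sub_smul_diagonal_of_mem_spanSubset _ _ hv]
    nlinarith [neg_abs_le (v ⬝ᵥ G.adjMatrix ℝ *ᵥ v), hT v]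
  · have hcompl : {x | s x = -1} = {x | s x = 1}ᶜ := by
      ext x
      rcases hpm x with h | h <;> norm_num [h]
    rw [Pi.dim_spanSubset, Pi.dim_spanSubset, hcompl, Set.ncard_add_ncard_compl,
      Module.finrank_fintype_fun_eq_card, Nat.card_eq_fintype_card]
end

section
/- If a configuration on ℤ² has no two ions at squared distance 1 or 2, and its density (in the sense of a periodic configuration with period L) is strictly greater than 1/5, then some ion has another ion at squared distance exactly 4 or 5. -/
/-!
Around every ion place the plus-shaped pentomino formed by the ion and its four lattice
neighbours. Two such pluses meet only if their centres are at squared distance `1`, `2` or `4`.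
So if no two ions are at squared distance `4`, the pluses around the ions are pairwise disjoint,
and by periodicity they stay disjoint after reduction to the discrete torus `(ℤ/L)²`. The pluses
around the ions of one period cell then cover `5 · #ions` of the `L²` cells of the torus, hence
the density is at most `1/5`.
-/

open Function Finset

def sqDist (x y : ℤ × ℤ) : ℤ := (x.1 - y.1) ^ 2 + (x.2 - y.2) ^ 2

def torusProj (L : ℕ) : ℤ × ℤ →+ ZMod L × ZMod L :=
  (Int.castAddHom (ZMod L)).prodMap (Int.castAddHom (ZMod L))

def plus : Finset (ℤ × ℤ) := {(0, 0), (1, 0), (-1, 0), (0, 1), (0, -1)}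

-- The conclusion `a = b` forces `x = y`: translates at distinct ions are disjoint.
def TranslatesPairwiseDisjoint (O : Finset (ℤ × ℤ)) (w : ℤ × ℤ → Bool) : Prop :=
  ∀ x y : ℤ × ℤ, w x = true → w y = true → ∀ a ∈ O, ∀ b ∈ O, x + a = y + b → a = b

section Torus

variable {L : ℕ}

lemma torusProj_apply (x : ℤ × ℤ) : torusProj L x = ((x.1 : ZMod L), (x.2 : ZMod L)) := rfl

lemma exists_eq_add_smul_of_torusProj_eq {x y : ℤ × ℤ} (h : torusProj L x = torusProj L y) :
    ∃ k : ℤ × ℤ, y = x + (L : ℤ) • k := by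
  simp only [torusProj_apply, Prod.ext_iff, ZMod.intCast_eq_intCast_iff_dvd_sub] at h
  obtain ⟨⟨m, hm⟩, ⟨n, hn⟩⟩ := h
  exact ⟨(m, n), Prod.ext (by simp; linarith) (by simp; linarith)⟩

lemma injOn_torusProj_natCast_box (L : ℕ) :
    Set.InjOn (fun p : ℕ × ℕ => torusProj L ((p.1 : ℤ), (p.2 : ℤ)))
      ↑(range L ×ˢ range L : Finset (ℕ × ℕ)) := by
  rintro ⟨p₁, p₂⟩ hp ⟨q₁, q₂⟩ hq h
  simp only [coe_product, coe_range, Set.mem_prod, Set.mem_Iio] at hp hq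
  simp only [torusProj_apply, Int.cast_natCast, Prod.ext_iff, ZMod.natCast_eq_natCast_iff',
    Nat.mod_eq_of_lt hp.1, Nat.mod_eq_of_lt hp.2, Nat.mod_eq_of_lt hq.1,
    Nat.mod_eq_of_lt hq.2] at h
  exact Prod.ext h.1 h.2

variable {α : Type*} {w : ℤ × ℤ → α}

lemma periodic_intCast_smul (h₁ : Periodic w ((L : ℤ), 0)) (h₂ : Periodic w (0, (L : ℤ)))
    (k : ℤ × ℤ) : Periodic w ((L : ℤ) • k) := by
  have hk : (L : ℤ) • k = k.1 • ((L : ℤ), (0 : ℤ)) + k.2 • ((0 : ℤ), (L : ℤ)) := by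
    ext <;> simp [mul_comm]
  rw [hk]
  exact (h₁.zsmul k.1).add_period (h₂.zsmul k.2)

end Torus

theorem card_mul_card_le_of_translatesPairwiseDisjoint {L : ℕ} [NeZero L] {w : ℤ × ℤ → Bool}
    (h₁ : Periodic w ((L : ℤ), 0)) (h₂ : Periodic w (0, (L : ℤ))) {O S : Finset (ℤ × ℤ)}
    (hO : TranslatesPairwiseDisjoint O w) (hSw : ∀ x ∈ S, w x = true)
    (hS : Set.InjOn (torusProj L) S) :
    #S * #O ≤ L * L := by
  have hinj : Set.InjOn (fun z : (ℤ × ℤ) × (ℤ × ℤ) => torusProj L (z.1 + z.2)) ↑(S ×ˢ O) := by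
    rintro ⟨x, a⟩ hxa ⟨y, b⟩ hyb h
    simp only [coe_product, Set.mem_prod, mem_coe] at hxa hyb h
    obtain ⟨k, hk⟩ := exists_eq_add_smul_of_torusProj_eq h
    have hy' : w (y - (L : ℤ) • k) = true := by
      rw [(periodic_intCast_smul h₁ h₂ k).sub_eq]
      exact hSw y hyb.1
    obtain rfl : a = b := hO x _ (hSw x hxa.1) hy' a hxa.2 b hyb.2
      (by rw [sub_add_eq_add_sub, hk, add_sub_cancel_right])
    obtain rfl : x = y := hS hxa.1 hyb.1 (by simpa only [map_add, add_left_inj] using h)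
    rfl
  simpa [card_product, ZMod.card] using
    card_le_card_of_injOn _ (fun _ _ => mem_coe.2 (mem_univ _)) hinj

theorem card_filter_box_mul_card_le {L : ℕ} [NeZero L] {w : ℤ × ℤ → Bool}
    (h₁ : Periodic w ((L : ℤ), 0)) (h₂ : Periodic w (0, (L : ℤ))) {O : Finset (ℤ × ℤ)}
    (hO : TranslatesPairwiseDisjoint O w) :
    #((range L ×ˢ range L).filter fun p => w ((p.1 : ℤ), (p.2 : ℤ)) = true) * #O ≤ L * L := by
  have hcast : Injective fun p : ℕ × ℕ => ((p.1 : ℤ), (p.2 : ℤ)) :=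
    Nat.cast_injective.prodMap Nat.cast_injective
  rw [← card_image_of_injective _ hcast]
  refine card_mul_card_le_of_translatesPairwiseDisjoint h₁ h₂ hO ?_ ?_
  · simp only [forall_mem_image]
    exact fun p hp => (mem_filter.1 hp).2
  · rw [coe_image]
    exact (injOn_torusProj_natCast_box L).image_of_comp.mono
      (Set.image_mono (coe_subset.2 (filter_subset _ _)))

lemma sqDist_eq_of_add_eq {x y a b : ℤ × ℤ} (h : x + a = y + b) : sqDist x y = sqDist b a := by
  obtain ⟨h₁, h₂⟩ := Prod.ext_iff.1 h
  simp only [Prod.fst_add, Prod.snd_add] at h₁ h₂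
  rw [sqDist, sqDist, show x.1 - y.1 = b.1 - a.1 by linarith,
    show x.2 - y.2 = b.2 - a.2 by linarith]

lemma card_plus : #plus = 5 := rfl

lemma sqDist_mem_of_mem_plus :
    ∀ a ∈ plus, ∀ b ∈ plus, a ≠ b → sqDist a b ∈ ({1, 2, 4} : Finset ℤ) := by
  decide

lemma translatesPairwiseDisjoint_plus {w : ℤ × ℤ → Bool}
    (hmin : ∀ x y, w x = true → w y = true → x ≠ y → 3 ≤ sqDist x y)
    (hfour : ∀ x y, w x = true → w y = true → x ≠ y → sqDist x y ≠ 4) :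
    TranslatesPairwiseDisjoint plus w := by
  intro x y hx hy a ha b hb hab
  by_contra hne
  have hxy : x ≠ y := by
    rintro rfl
    exact hne (add_left_cancel hab)
  have hdist := sqDist_eq_of_add_eq hab
  have hplus := sqDist_mem_of_mem_plus b hb a ha (Ne.symm hne)
  simp only [mem_insert, mem_singleton] at hplus
  have := hmin x y hx hy hxy
  have := hfour x y hx hy hxy
  omega

/-- If an `L`-periodic configuration on `ℤ²` has no two ions at squared distance `1` or `2`
(i.e. distinct ions are at squared distance `≥ 3`) and has density strictly greater than
`1/5`, then some two distinct ions are at squared distance exactly `4` or `5`. -/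
theorem exists_dist_four_or_five_of_density_gt_one_fifth
    (w : ℤ × ℤ → Bool) (L : ℕ) (hL : 0 < L)
    (hper : ∀ x : ℤ × ℤ, w (x + ((L : ℤ), 0)) = w x ∧ w (x + (0, (L : ℤ))) = w x)
    (hmin : ∀ x y : ℤ × ℤ, w x = true → w y = true → x ≠ y →
      3 ≤ (x.1 - y.1) ^ 2 + (x.2 - y.2) ^ 2)
    (hdens : (1 : ℝ) / 5 <
      (((Finset.range L ×ˢ Finset.range L).filter
        (fun p => w ((p.1 : ℤ), (p.2 : ℤ)) = true)).card : ℝ) / (L : ℝ) ^ 2) :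
    ∃ x y : ℤ × ℤ, w x = true ∧ w y = true ∧ x ≠ y ∧
      ((x.1 - y.1) ^ 2 + (x.2 - y.2) ^ 2 = 4 ∨ (x.1 - y.1) ^ 2 + (x.2 - y.2) ^ 2 = 5) := by
  by_contra! hfar
  have : NeZero L := ⟨hL.ne'⟩
  have hcount := card_filter_box_mul_card_le (fun x => (hper x).1) (fun x => (hper x).2)
    (translatesPairwiseDisjoint_plus hmin fun x y hx hy hxy => (hfar x y hx hy hxy).1)
  rw [card_plus] at hcount
  rw [lt_div_iff₀ (by positivity)] at hdens
  have := (Nat.cast_le (α := ℝ)).2 hcount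
  push_cast at this
  nlinarith
end
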